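/- arXiv:1710.09960 — 3 statements merged into one kernel-verified Lean document; each statement's English description precedes it below -/
import Mathlib

section
/- Fix positive real numbers r1 = |Z1| and r2 = |Z2| with r1 ≠ r2. Define U(Δ) = 2/r1 + 2/r2 + 1/√(r1² + r2² + 2 r1 r2 cos Δ) + 1/√(r1² + r2² − 2 r1 r2 cos Δ) for Δ ∈ [0, π/2]. Then U is strictly decreasing on [0, π/2]; more precisely its derivative satisfies dU/dΔ ≤ 0 on [0, π/2], with equality if and only if Δ = 0 or Δ = π/2. -/
/-!
Write `U(Δ) = 2/r1 + 2/r2 + φ(a + b cos Δ) + φ(a - b cos Δ)` with `φ t = 1/√t`, `a = r1² + r2²`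
and `b = 2 r1 r2`, so that `0 < b < a` because `r1 ≠ r2`. By the chain rule
`U'(Δ) = b sin Δ (φ'(a - b cos Δ) - φ'(a + b cos Δ))`. Since `φ` is strictly convex, `φ'` is
strictly increasing, so the bracket is negative exactly when `cos Δ > 0`; together with the factor
`sin Δ` this makes `U'` negative on `(0, π/2)` and zero at both endpoints.
-/

open Real Set

noncomputable def cosPair (φ : ℝ → ℝ) (a b x : ℝ) : ℝ :=
  φ (a + b * cos x) + φ (a - b * cos x)

section CosPair

variable {φ φ' : ℝ → ℝ} {a b : ℝ}

lemma add_mul_cos_pos_of_abs_lt (hab : |b| < a) (x : ℝ) : 0 < a + b * cos x := by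
  have : |b * cos x| ≤ |b| := by
    rw [abs_mul]; exact mul_le_of_le_one_right (abs_nonneg b) (abs_cos_le_one x)
  linarith [neg_abs_le (b * cos x)]

lemma sub_mul_cos_pos_of_abs_lt (hab : |b| < a) (x : ℝ) : 0 < a - b * cos x := by
  simpa [sub_eq_add_neg] using add_mul_cos_pos_of_abs_lt (b := -b) (by rwa [abs_neg]) x

lemma hasDerivAt_cosPair (hφ : ∀ t, 0 < t → HasDerivAt φ (φ' t) t) (hab : |b| < a) (x : ℝ) :
    HasDerivAt (cosPair φ a b)
      (b * sin x * (φ' (a - b * cos x) - φ' (a + b * cos x))) x := by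
  have hplus := (hφ _ (add_mul_cos_pos_of_abs_lt hab x)).comp x
    (((hasDerivAt_cos x).const_mul b).const_add a)
  have hminus := (hφ _ (sub_mul_cos_pos_of_abs_lt hab x)).comp x
    (((hasDerivAt_cos x).const_mul b).const_sub a)
  refine (hplus.add hminus).congr_deriv ?_
  ring

lemma deriv_cosPair_neg (hφ : ∀ t, 0 < t → HasDerivAt φ (φ' t) t)
    (hφ' : StrictMonoOn φ' (Ioi 0)) (hb : 0 < b) (hab : b < a)
    {x : ℝ} (hx : x ∈ Ioo 0 (π / 2)) : deriv (cosPair φ a b) x < 0 := by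
  have hab' : |b| < a := by rwa [abs_of_pos hb]
  rw [(hasDerivAt_cosPair hφ hab' x).deriv]
  have hsin : 0 < sin x := sin_pos_of_pos_of_lt_pi hx.1 (by linarith [hx.2, pi_pos])
  have hcos : 0 < cos x := cos_pos_of_mem_Ioo ⟨by linarith [hx.1, pi_pos], hx.2⟩
  have hφ'_lt : φ' (a - b * cos x) < φ' (a + b * cos x) :=
    hφ' (sub_mul_cos_pos_of_abs_lt hab' x) (add_mul_cos_pos_of_abs_lt hab' x)
      (by nlinarith)
  exact mul_neg_of_pos_of_neg (mul_pos hb hsin) (sub_neg.2 hφ'_lt)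

theorem cosPair_strictAntiOn_and_deriv (hφ : ∀ t, 0 < t → HasDerivAt φ (φ' t) t)
    (hφ' : StrictMonoOn φ' (Ioi 0)) (hb : 0 < b) (hab : b < a) :
    StrictAntiOn (cosPair φ a b) (Icc 0 (π / 2)) ∧
    ∀ x ∈ Icc (0 : ℝ) (π / 2),
      deriv (cosPair φ a b) x ≤ 0 ∧ (deriv (cosPair φ a b) x = 0 ↔ x = 0 ∨ x = π / 2) := by
  have hder x := hasDerivAt_cosPair hφ (by rwa [abs_of_pos hb]) x
  have hneg x (hx : x ∈ Ioo 0 (π / 2)) := deriv_cosPair_neg hφ hφ' hb hab hx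
  have hzero x (hx : x = 0 ∨ x = π / 2) : deriv (cosPair φ a b) x = 0 := by
    rcases hx with rfl | rfl <;> simp [(hder _).deriv]
  refine ⟨strictAntiOn_of_deriv_neg (convex_Icc _ _)
      (fun x _ => (hder x).continuousAt.continuousWithinAt)
      (fun x hx => hneg x (by rwa [interior_Icc] at hx)), fun x hx => ?_⟩
  by_cases hend : x = 0 ∨ x = π / 2
  · exact ⟨(hzero x hend).le, iff_of_true (hzero x hend) hend⟩
  · have hx' : x ∈ Ioo 0 (π / 2) := by
      push Not at hend
      exact ⟨lt_of_le_of_ne hx.1 (Ne.symm hend.1), lt_of_le_of_ne hx.2 hend.2⟩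
    exact ⟨(hneg x hx').le, iff_of_false (hneg x hx').ne hend⟩

end CosPair

lemma hasDerivAt_one_div_sqrt {t : ℝ} (ht : 0 < t) :
    HasDerivAt (fun s => 1 / √s) (-(2 * t * √t)⁻¹) t := by
  have hsqrt : HasDerivAt (fun s => √s) (1 / (2 * √t)) t := (hasDerivAt_id t).sqrt ht.ne'
  simp only [one_div] at hsqrt ⊢
  refine (hsqrt.inv (sqrt_pos.2 ht).ne').congr_deriv ?_
  rw [sq_sqrt ht.le]
  field_simp

lemma strictMonoOn_neg_inv_two_mul_mul_sqrt :
    StrictMonoOn (fun t : ℝ => -(2 * t * √t)⁻¹) (Ioi 0) := by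
  intro s hs t ht hst
  have hs' : (0 : ℝ) < s := hs
  have hpos : 0 < 2 * s * √s := by positivity
  have hlt : 2 * s * √s < 2 * t * √t := by
    have := sqrt_lt_sqrt hs'.le hst
    have := sqrt_pos.2 hs'
    nlinarith
  simpa using inv_strictAntiOn hpos (hpos.trans hlt) hlt

/-- For fixed `0 < r1`, `0 < r2`, `r1 ≠ r2`, the potential
`U(Δ) = 2/r1 + 2/r2 + 1/√(r1²+r2²+2r1r2 cos Δ) + 1/√(r1²+r2²−2r1r2 cos Δ)`
is strictly decreasing on `[0, π/2]`, with `U'(Δ) ≤ 0` there and `U'(Δ) = 0` iff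
`Δ = 0` or `Δ = π/2`. -/
theorem stmt1 (r1 r2 : ℝ) (hr1 : 0 < r1) (hr2 : 0 < r2) (hne : r1 ≠ r2)
    (U : ℝ → ℝ)
    (hU : ∀ Δ : ℝ, U Δ = 2 / r1 + 2 / r2
      + 1 / Real.sqrt (r1 ^ 2 + r2 ^ 2 + 2 * r1 * r2 * Real.cos Δ)
      + 1 / Real.sqrt (r1 ^ 2 + r2 ^ 2 - 2 * r1 * r2 * Real.cos Δ)) :
    StrictAntiOn U (Icc 0 (π / 2)) ∧
    ∀ Δ ∈ Icc (0 : ℝ) (π / 2),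
      deriv U Δ ≤ 0 ∧ (deriv U Δ = 0 ↔ Δ = 0 ∨ Δ = π / 2) := by
  have hb : 0 < 2 * r1 * r2 := by positivity
  have hab : 2 * r1 * r2 < r1 ^ 2 + r2 ^ 2 := by
    nlinarith [sq_pos_of_ne_zero (sub_ne_zero.2 hne)]
  have hUeq : U = fun x =>
      (2 / r1 + 2 / r2) + cosPair (fun s => 1 / √s) (r1 ^ 2 + r2 ^ 2) (2 * r1 * r2) x := by
    funext x; rw [hU, cosPair]; ring
  obtain ⟨hanti, hderiv⟩ := cosPair_strictAntiOn_and_deriv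
    (fun t ht => hasDerivAt_one_div_sqrt ht) strictMonoOn_neg_inv_two_mul_mul_sqrt hb hab
  subst hUeq
  refine ⟨hanti.const_add _, fun x hx => ?_⟩
  rw [deriv_const_add]
  exact hderiv x hx
end

section
/- For every θ ∈ (0, π/6), each of the three quantities g₂(θ) = (3/2)[ (π²/2)^{1/3} + (2θ²)^{1/3} + (2(θ+π/2)²)^{1/3} ], g₃(θ) = (3/2)[ (2π²)^{1/3} + 2(2θ²)^{1/3} ], and g₄(θ) = (3/2)[ (2π²)^{1/3} + 3(¼(θ+π/2)²)^{1/3} + (¼(π/2−θ)²)^{1/3} ] is greater than or equal to g₁(θ) = (3/2)[ (2π²)^{1/3} + (2θ²)^{1/3} + θ^{2/3} ]. -/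
open Real

private lemma cbrt_le_of_cube {x q : ℝ} (hx : 0 ≤ x) (hq : 0 ≤ q) (h : x ≤ q ^ 3) :
    x ^ ((1 : ℝ) / 3) ≤ q := by
  have hq3 : ((q ^ 3 : ℝ)) ^ ((1 : ℝ) / 3) = q := by
    rw [← Real.rpow_natCast q 3, ← Real.rpow_mul hq]
    norm_num
  calc x ^ ((1 : ℝ) / 3) ≤ (q ^ 3) ^ ((1 : ℝ) / 3) :=
        Real.rpow_le_rpow hx h (by norm_num)
    _ = q := hq3

private lemma le_cbrt_of_cube {x q : ℝ} (hq : 0 ≤ q) (h : q ^ 3 ≤ x) :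
    q ≤ x ^ ((1 : ℝ) / 3) := by
  have hq3 : ((q ^ 3 : ℝ)) ^ ((1 : ℝ) / 3) = q := by
    rw [← Real.rpow_natCast q 3, ← Real.rpow_mul hq]
    norm_num
  calc q = (q ^ 3) ^ ((1 : ℝ) / 3) := hq3.symm
    _ ≤ x ^ ((1 : ℝ) / 3) := Real.rpow_le_rpow (by positivity) h (by norm_num)

set_option maxHeartbeats 2000000 in
/-- For `θ ∈ (0, π/6)`, each of `g₂(θ), g₃(θ), g₄(θ)` is at least
`g₁(θ) = (3/2)[(2π²)^(1/3) + (2θ²)^(1/3) + θ^(2/3)]`, where `x^(2/3) := (x²)^(1/3)`. -/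
theorem stmt13 (θ : ℝ) (hθ : θ ∈ Set.Ioo 0 (π / 6)) :
    (3 / 2 * ((π ^ 2 / 2) ^ ((1 : ℝ) / 3) + (2 * θ ^ 2) ^ ((1 : ℝ) / 3)
        + (2 * (θ + π / 2) ^ 2) ^ ((1 : ℝ) / 3))
      ≥ 3 / 2 * ((2 * π ^ 2) ^ ((1 : ℝ) / 3) + (2 * θ ^ 2) ^ ((1 : ℝ) / 3)
        + (θ ^ 2) ^ ((1 : ℝ) / 3))) ∧
    (3 / 2 * ((2 * π ^ 2) ^ ((1 : ℝ) / 3) + 2 * (2 * θ ^ 2) ^ ((1 : ℝ) / 3))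
      ≥ 3 / 2 * ((2 * π ^ 2) ^ ((1 : ℝ) / 3) + (2 * θ ^ 2) ^ ((1 : ℝ) / 3)
        + (θ ^ 2) ^ ((1 : ℝ) / 3))) ∧
    (3 / 2 * ((2 * π ^ 2) ^ ((1 : ℝ) / 3) + 3 * ((θ + π / 2) ^ 2 / 4) ^ ((1 : ℝ) / 3)
        + ((π / 2 - θ) ^ 2 / 4) ^ ((1 : ℝ) / 3))
      ≥ 3 / 2 * ((2 * π ^ 2) ^ ((1 : ℝ) / 3) + (2 * θ ^ 2) ^ ((1 : ℝ) / 3)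
        + (θ ^ 2) ^ ((1 : ℝ) / 3))) := by
  obtain ⟨h0, h6⟩ := hθ
  have hπ : (0 : ℝ) < π := Real.pi_pos
  set A : ℝ := (π ^ 2) ^ ((1 : ℝ) / 3) with hA
  have hA0 : 0 ≤ A := Real.rpow_nonneg (sq_nonneg π) _
  -- factorizations
  have hπ2 : (0 : ℝ) ≤ π ^ 2 := sq_nonneg π
  have r2π : (2 * π ^ 2) ^ ((1 : ℝ) / 3) = A * (2 : ℝ) ^ ((1 : ℝ) / 3) := by
    rw [show (2 * π ^ 2 : ℝ) = π ^ 2 * 2 by ring, Real.mul_rpow hπ2 (by norm_num)]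
  have rhalf : (π ^ 2 / 2) ^ ((1 : ℝ) / 3) = A * ((1 : ℝ) / 2) ^ ((1 : ℝ) / 3) := by
    rw [show (π ^ 2 / 2 : ℝ) = π ^ 2 * (1 / 2) by ring, Real.mul_rpow hπ2 (by norm_num)]
  have r36 : (π ^ 2 / 36) ^ ((1 : ℝ) / 3) = A * ((1 : ℝ) / 36) ^ ((1 : ℝ) / 3) := by
    rw [show (π ^ 2 / 36 : ℝ) = π ^ 2 * (1 / 36) by ring, Real.mul_rpow hπ2 (by norm_num)]
  have r18 : (π ^ 2 / 18) ^ ((1 : ℝ) / 3) = A * ((1 : ℝ) / 18) ^ ((1 : ℝ) / 3) := by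
    rw [show (π ^ 2 / 18 : ℝ) = π ^ 2 * (1 / 18) by ring, Real.mul_rpow hπ2 (by norm_num)]
  have r16 : (π ^ 2 / 16) ^ ((1 : ℝ) / 3) = A * ((1 : ℝ) / 16) ^ ((1 : ℝ) / 3) := by
    rw [show (π ^ 2 / 16 : ℝ) = π ^ 2 * (1 / 16) by ring, Real.mul_rpow hπ2 (by norm_num)]
  -- numerical constant bounds
  have c2 : (2 : ℝ) ^ ((1 : ℝ) / 3) ≤ 1.26 :=
    cbrt_le_of_cube (by norm_num) (by norm_num) (by norm_num)
  have c36 : ((1 : ℝ) / 36) ^ ((1 : ℝ) / 3) ≤ 0.304 :=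
    cbrt_le_of_cube (by norm_num) (by norm_num) (by norm_num)
  have c18 : ((1 : ℝ) / 18) ^ ((1 : ℝ) / 3) ≤ 0.382 :=
    cbrt_le_of_cube (by norm_num) (by norm_num) (by norm_num)
  have chalf : (0.7936 : ℝ) ≤ ((1 : ℝ) / 2) ^ ((1 : ℝ) / 3) :=
    le_cbrt_of_cube (by norm_num) (by norm_num)
  have c16 : (0.396 : ℝ) ≤ ((1 : ℝ) / 16) ^ ((1 : ℝ) / 3) :=
    le_cbrt_of_cube (by norm_num) (by norm_num)
  -- θ-dependent monotone bounds
  have hsq : θ ^ 2 ≤ π ^ 2 / 36 := by nlinarith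
  have m1 : (θ ^ 2) ^ ((1 : ℝ) / 3) ≤ (π ^ 2 / 36) ^ ((1 : ℝ) / 3) :=
    Real.rpow_le_rpow (sq_nonneg θ) hsq (by norm_num)
  have m2 : (2 * θ ^ 2) ^ ((1 : ℝ) / 3) ≤ (π ^ 2 / 18) ^ ((1 : ℝ) / 3) :=
    Real.rpow_le_rpow (by positivity) (by nlinarith) (by norm_num)
  have m3 : (π ^ 2 / 2) ^ ((1 : ℝ) / 3) ≤ (2 * (θ + π / 2) ^ 2) ^ ((1 : ℝ) / 3) :=
    Real.rpow_le_rpow (by positivity) (by nlinarith) (by norm_num)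
  have m4 : (π ^ 2 / 16) ^ ((1 : ℝ) / 3) ≤ ((θ + π / 2) ^ 2 / 4) ^ ((1 : ℝ) / 3) :=
    Real.rpow_le_rpow (by positivity) (by nlinarith) (by norm_num)
  have m5 : (0 : ℝ) ≤ ((π / 2 - θ) ^ 2 / 4) ^ ((1 : ℝ) / 3) :=
    Real.rpow_nonneg (by positivity) _
  refine ⟨?_, ?_, ?_⟩
  · -- g₂ ≥ g₁
    have key : (2 * π ^ 2) ^ ((1 : ℝ) / 3) + (θ ^ 2) ^ ((1 : ℝ) / 3)
        ≤ (π ^ 2 / 2) ^ ((1 : ℝ) / 3) + (2 * (θ + π / 2) ^ 2) ^ ((1 : ℝ) / 3) := by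
      have b1 := mul_le_mul_of_nonneg_left c2 hA0
      have b2 := mul_le_mul_of_nonneg_left c36 hA0
      have b3 := mul_le_mul_of_nonneg_left chalf hA0
      rw [r36] at m1
      rw [r2π, rhalf]
      linarith
    linarith
  · -- g₃ ≥ g₁
    have key : (θ ^ 2) ^ ((1 : ℝ) / 3) ≤ (2 * θ ^ 2) ^ ((1 : ℝ) / 3) :=
      Real.rpow_le_rpow (sq_nonneg θ) (by nlinarith [sq_nonneg θ]) (by norm_num)
    linarith
  · -- g₄ ≥ g₁
    have key : (2 * θ ^ 2) ^ ((1 : ℝ) / 3) + (θ ^ 2) ^ ((1 : ℝ) / 3)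
        ≤ 3 * ((θ + π / 2) ^ 2 / 4) ^ ((1 : ℝ) / 3)
          + ((π / 2 - θ) ^ 2 / 4) ^ ((1 : ℝ) / 3) := by
      have b1 := mul_le_mul_of_nonneg_left c18 hA0
      have b2 := mul_le_mul_of_nonneg_left c36 hA0
      have b3 := mul_le_mul_of_nonneg_left c16 hA0
      rw [r18] at m2
      rw [r36] at m1
      rw [r16] at m4
      linarith
    linarith
end

section
/- Let Z₁, Z₂ ∈ ℝ² be nonzero planar vectors, and let Δ ∈ [0, π/2] be the angle between the lines spanned by Z₁ and Z₂ (i.e. Δ = β if β ≤ π/2, else Δ = π − β, where β is the angle between the vectors). Define the reflected vectors Z̃₁ = (−|Z₁ₓ|, |Z₁ᵧ|) and Z̃₂ = (−|Z₂ₓ|, −|Z₂ᵧ|) and let Δ̃ be the angle between the lines spanned by Z̃₁ and Z̃₂. Then Δ̃ ≥ Δ, with equality if and only if Z₁ and Z₂ lie in two adjacent closed quadrants. -/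
open Real

/-- Euclidean norm on `ℝ × ℝ`. -/
noncomputable def n2 (p : ℝ × ℝ) : ℝ := Real.sqrt (p.1 ^ 2 + p.2 ^ 2)

/-- The angle in `[0, π/2]` between the lines spanned by two nonzero vectors. -/
noncomputable def lineAngle (Z W : ℝ × ℝ) : ℝ :=
  let β := Real.arccos ((Z.1 * W.1 + Z.2 * W.2) / (n2 Z * n2 W))
  if β ≤ π / 2 then β else π - β

/-- Membership in the four closed quadrants. -/
def inQ1 (p : ℝ × ℝ) : Prop := 0 ≤ p.1 ∧ 0 ≤ p.2
def inQ2 (p : ℝ × ℝ) : Prop := p.1 ≤ 0 ∧ 0 ≤ p.2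
def inQ3 (p : ℝ × ℝ) : Prop := p.1 ≤ 0 ∧ p.2 ≤ 0
def inQ4 (p : ℝ × ℝ) : Prop := 0 ≤ p.1 ∧ p.2 ≤ 0

/-- `Z` and `W` lie in two adjacent closed quadrants (sharing a boundary axis). -/
def AdjacentQuadrants (Z W : ℝ × ℝ) : Prop :=
  (inQ1 Z ∧ inQ2 W) ∨ (inQ2 Z ∧ inQ1 W) ∨ (inQ2 Z ∧ inQ3 W) ∨ (inQ3 Z ∧ inQ2 W) ∨
  (inQ3 Z ∧ inQ4 W) ∨ (inQ4 Z ∧ inQ3 W) ∨ (inQ4 Z ∧ inQ1 W) ∨ (inQ1 Z ∧ inQ4 W)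

/-- The reflections `Z̃₁ = (−|Z₁ₓ|, |Z₁ᵧ|)`, `Z̃₂ = (−|Z₂ₓ|, −|Z₂ᵧ|)`. -/
noncomputable def refl1 (Z : ℝ × ℝ) : ℝ × ℝ := (-|Z.1|, |Z.2|)
noncomputable def refl2 (Z : ℝ × ℝ) : ℝ × ℝ := (-|Z.1|, -|Z.2|)

/-!
With `p = Z₁ₓ Z₂ₓ` and `q = Z₁ᵧ Z₂ᵧ`, the cosine of the angle between the lines is
`|p + q| / (‖Z₁‖ ‖Z₂‖)`. The reflections preserve the norms and turn the inner product into
`|p| - |q|`, so the reflected cosine is `||p| - |q|| / (‖Z₁‖ ‖Z₂‖)`. Now `||p| - |q|| ≤ |p + q|`,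
with equality iff `p q ≤ 0`, and `arccos` is strictly decreasing on `[-1, 1]`; finally `p q ≤ 0`
says exactly that `Z₁, Z₂` lie in adjacent closed quadrants.
-/

lemma n2_refl1 (Z : ℝ × ℝ) : n2 (refl1 Z) = n2 Z := by
  simp [n2, refl1]

lemma n2_refl2 (Z : ℝ × ℝ) : n2 (refl2 Z) = n2 Z := by
  simp [n2, refl2]

lemma abs_dot_le_n2_mul_n2 (Z W : ℝ × ℝ) : |Z.1 * W.1 + Z.2 * W.2| ≤ n2 Z * n2 W := by
  rw [n2, n2, ← Real.sqrt_mul (by positivity), ← Real.sqrt_sq_eq_abs]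
  exact Real.sqrt_le_sqrt (by nlinarith [sq_nonneg (Z.1 * W.2 - Z.2 * W.1)])

lemma lineAngle_eq_arccos_abs (Z W : ℝ × ℝ) :
    lineAngle Z W = arccos (|Z.1 * W.1 + Z.2 * W.2| / (n2 Z * n2 W)) := by
  have hD : 0 ≤ n2 Z * n2 W := mul_nonneg (Real.sqrt_nonneg _) (Real.sqrt_nonneg _)
  rw [← abs_of_nonneg hD, ← abs_div]
  simp only [lineAngle]
  split_ifs with h
  · rw [abs_of_nonneg (arccos_le_pi_div_two.mp h)]
  · rw [abs_of_neg (not_le.mp (mt arccos_le_pi_div_two.mpr h)), arccos_neg]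

lemma lineAngle_refl1_refl2 (Z W : ℝ × ℝ) :
    lineAngle (refl1 Z) (refl2 W) = arccos (|(|Z.1 * W.1| - |Z.2 * W.2|)| / (n2 Z * n2 W)) := by
  rw [lineAngle_eq_arccos_abs, n2_refl1, n2_refl2]
  congr 3
  simp only [refl1, refl2, abs_mul]
  ring

lemma abs_abs_sub_abs_eq_abs_add_iff {p q : ℝ} : |(|p| - |q|)| = |p + q| ↔ p * q ≤ 0 := by
  rw [← sq_eq_sq_iff_abs_eq_abs, ← abs_eq_neg_self]
  constructor <;> intro h <;> nlinarith [sq_abs p, sq_abs q, abs_mul p q]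

lemma adjacentQuadrants_iff (Z W : ℝ × ℝ) :
    AdjacentQuadrants Z W ↔ Z.1 * W.1 * (Z.2 * W.2) ≤ 0 := by
  simp only [AdjacentQuadrants, inQ1, inQ2, inQ3, inQ4, mul_nonpos_iff, mul_nonneg_iff]
  constructor
  · rintro (h | h | h | h | h | h | h | h) <;> simp [h]
  · rintro (⟨hp | hp, hq | hq⟩ | ⟨hp | hp, hq | hq⟩) <;> simp [hp, hq]

lemma arccos_div_le_arccos_div {a b D : ℝ} (ha : 0 ≤ a) (hab : a ≤ b) (hbD : b ≤ D) :
    arccos (b / D) ≤ arccos (a / D) :=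
  arccos_le_arccos (div_le_div_of_nonneg_right hab (ha.trans (hab.trans hbD)))

lemma arccos_div_eq_arccos_div_iff {a b D : ℝ} (ha : 0 ≤ a) (haD : a ≤ D) (hb : 0 ≤ b)
    (hbD : b ≤ D) : arccos (a / D) = arccos (b / D) ↔ a = b := by
  rcases (ha.trans haD).eq_or_lt with rfl | hD
  · simp only [le_antisymm haD ha, le_antisymm hbD hb]
  have hunit {x : ℝ} (hx : 0 ≤ x) (hxD : x ≤ D) : x / D ∈ Set.Icc (-1) 1 :=
    ⟨by linarith [div_nonneg hx hD.le], (div_le_one hD).mpr hxD⟩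
  rw [arccos_injOn.eq_iff (hunit ha haD) (hunit hb hbD), div_left_inj' hD.ne']

theorem stmt16_general (Z1 Z2 : ℝ × ℝ) :
    lineAngle (refl1 Z1) (refl2 Z2) ≥ lineAngle Z1 Z2 ∧
    (lineAngle (refl1 Z1) (refl2 Z2) = lineAngle Z1 Z2 ↔ AdjacentQuadrants Z1 Z2) := by
  have hle : |(|Z1.1 * Z2.1| - |Z1.2 * Z2.2|)| ≤ |Z1.1 * Z2.1 + Z1.2 * Z2.2| := by
    simpa using abs_abs_sub_abs_le_abs_sub (Z1.1 * Z2.1) (-(Z1.2 * Z2.2))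
  have hcs := abs_dot_le_n2_mul_n2 Z1 Z2
  rw [lineAngle_refl1_refl2, lineAngle_eq_arccos_abs, adjacentQuadrants_iff,
    ← abs_abs_sub_abs_eq_abs_add_iff, ge_iff_le]
  exact ⟨arccos_div_le_arccos_div (abs_nonneg _) hle hcs,
    arccos_div_eq_arccos_div_iff (abs_nonneg _) (hle.trans hcs) (abs_nonneg _) hcs⟩

/-- For nonzero `Z₁, Z₂`, the angle between the lines spanned by the reflected vectors is at
least the angle between the original lines, with equality iff `Z₁, Z₂` lie in two adjacent
closed quadrants. -/
theorem stmt16 (Z1 Z2 : ℝ × ℝ) (h1 : Z1 ≠ 0) (h2 : Z2 ≠ 0) :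
    lineAngle (refl1 Z1) (refl2 Z2) ≥ lineAngle Z1 Z2 ∧
    (lineAngle (refl1 Z1) (refl2 Z2) = lineAngle Z1 Z2 ↔ AdjacentQuadrants Z1 Z2) :=
  stmt16_general Z1 Z2
end
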